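/- arXiv:2102.10019 — 5 statements merged into one kernel-verified Lean document; each statement's English description precedes it below -/
import Mathlib

section
/- Let Y ∈ {0,1} and G ∈ {L,H} be random variables with base rates μ_L = P[Y=1|G=L] and μ_H = P[Y=1|G=H] satisfying 0 < μ_L < μ_H < 1. Let ŷ ∈ {0,1} be a classifier with group positive-classification rates μ̂_G = P[ŷ=1|G] > 0. If P[G=L|ŷ=1] ≤ P[G=L|Y=1] (with 0 < P[G=L] < 1), then μ̂_H/μ̂_L ≥ μ_H/μ_L. -/
/-!
By Bayes' rule and the law of total probability, with `p_G = P[G]`,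
`P[G=L | ŷ=1] = μ̂_L p_L / (μ̂_L p_L + μ̂_H p_H)` and `P[G=L | Y=1] = μ_L p_L / (μ_L p_L + μ_H p_H)`.
Cross-multiplying the assumed inequality between these shares leaves `μ̂_L μ_H p_L p_H ≤ μ_L μ̂_H p_L p_H`.
-/

open MeasureTheory

/-- Conditional probability `P[A | B]` as a real number. -/
noncomputable def condProb {Ω : Type*} [MeasurableSpace Ω] (P : Measure Ω) (A B : Set Ω) : ℝ :=
  (P (A ∩ B)).toReal / (P B).toReal

section CondProb

variable {Ω : Type*} [MeasurableSpace Ω] (P : Measure Ω) [IsFiniteMeasure P]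

theorem condProb_mul_toReal {B : Set Ω} (hB : P B ≠ 0) (A : Set Ω) :
    condProb P A B * (P B).toReal = (P (A ∩ B)).toReal :=
  div_mul_cancel₀ _ (ENNReal.toReal_ne_zero.mpr ⟨hB, measure_ne_top P B⟩)

theorem toReal_eq_condProb_mul_add_condProb_compl_mul {E : Set Ω} (hE : MeasurableSet E)
    (hE₀ : P E ≠ 0) (hEc₀ : P Eᶜ ≠ 0) (A : Set Ω) :
    (P A).toReal = condProb P A E * (P E).toReal + condProb P A Eᶜ * (P Eᶜ).toReal := by
  rw [condProb_mul_toReal P hE₀, condProb_mul_toReal P hEc₀, ← Set.sdiff_eq]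
  exact (measureReal_inter_add_sdiff hE).symm

theorem condProb_eq_condProb_mul_div {E : Set Ω} (hE₀ : P E ≠ 0) (A : Set Ω) :
    condProb P E A = condProb P A E * (P E).toReal / (P A).toReal := by
  rw [condProb_mul_toReal P hE₀, Set.inter_comm, condProb]

end CondProb

theorem div_le_div_of_share_le_share {a b a' b' p q : ℝ} (hp : 0 < p) (hq : 0 < q)
    (ha : 0 < a) (ha' : 0 < a') (hs : 0 < a * p + b * q) (hs' : 0 < a' * p + b' * q)
    (h : a' * p / (a' * p + b' * q) ≤ a * p / (a * p + b * q)) :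
    b / a ≤ b' / a' := by
  rw [div_le_div_iff₀ hs' hs] at h
  rw [div_le_div_iff₀ ha ha']
  have hpq := mul_pos hp hq
  have : b * a' * (p * q) ≤ b' * a * (p * q) := by nlinarith
  exact le_of_mul_le_mul_right this hpq

theorem classification_rate_ratio_ge_base_rate_ratio_general
    {Ω : Type*} [MeasurableSpace Ω] (P : Measure Ω) [IsProbabilityMeasure P]
    (Y1 Yhat1 EL : Set Ω)
    (hGL : MeasurableSet EL)
    (hGLpos : P EL ≠ 0) (hGHpos : P ELᶜ ≠ 0)
    (hY1pos : P Y1 ≠ 0) (hYhat1pos : P Yhat1 ≠ 0)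
    (μL μH μhatL μhatH : ℝ)
    (hμL : μL = condProb P Y1 EL) (hμH : μH = condProb P Y1 ELᶜ)
    (hμhatL : μhatL = condProb P Yhat1 EL) (hμhatH : μhatH = condProb P Yhat1 ELᶜ)
    (h0 : 0 < μL)
    (hhatL : 0 < μhatL)
    (hnotover : condProb P EL Yhat1 ≤ condProb P EL Y1) :
    μhatH / μhatL ≥ μH / μL := by
  have total := toReal_eq_condProb_mul_add_condProb_compl_mul P hGL hGLpos hGHpos
  have hY1 : 0 < (P Y1).toReal := ENNReal.toReal_pos hY1pos (measure_ne_top P _)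
  have hYhat1 : 0 < (P Yhat1).toReal := ENNReal.toReal_pos hYhat1pos (measure_ne_top P _)
  rw [condProb_eq_condProb_mul_div P hGLpos, condProb_eq_condProb_mul_div P hGLpos,
    total Y1, total Yhat1] at hnotover
  rw [total] at hY1 hYhat1
  subst hμL hμH hμhatL hμhatH
  exact div_le_div_of_share_le_share (ENNReal.toReal_pos hGLpos (measure_ne_top P _))
    (ENNReal.toReal_pos hGHpos (measure_ne_top P _)) h0 hhatL hY1 hYhat1 hnotover

/-- If the L group is not over-represented among positive classifications, then
the ratio of positive-classification rates is at least the ratio of base rates. -/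
theorem classification_rate_ratio_ge_base_rate_ratio
    {Ω : Type*} [MeasurableSpace Ω] (P : Measure Ω) [IsProbabilityMeasure P]
    (Y1 Yhat1 EL : Set Ω)
    (hY1 : MeasurableSet Y1) (hYhat1 : MeasurableSet Yhat1) (hGL : MeasurableSet EL)
    (hGLpos : P EL ≠ 0) (hGHpos : P ELᶜ ≠ 0)
    (hY1pos : P Y1 ≠ 0) (hYhat1pos : P Yhat1 ≠ 0)
    (μL μH μhatL μhatH : ℝ)
    (hμL : μL = condProb P Y1 EL) (hμH : μH = condProb P Y1 ELᶜ)
    (hμhatL : μhatL = condProb P Yhat1 EL) (hμhatH : μhatH = condProb P Yhat1 ELᶜ)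
    (h0 : 0 < μL) (h1 : μL < μH) (h2 : μH < 1)
    (hhatL : 0 < μhatL) (hhatH : 0 < μhatH)
    (hnotover : condProb P EL Yhat1 ≤ condProb P EL Y1) :
    μhatH / μhatL ≥ μH / μL :=
  classification_rate_ratio_ge_base_rate_ratio_general P Y1 Yhat1 EL hGL hGLpos hGHpos hY1pos
    hYhat1pos μL μH μhatL μhatH hμL hμH hμhatL hμhatH h0 hhatL hnotover
end

section
/- (Proposition 1) Suppose 0 < μ_L < μ_H < 1 and predictive uncertainty holds (TPR_G, FPR_G ∈ (0,1) for both groups). If TPR_L ≥ TPR_H and FPR_L ≥ FPR_H, then the L group is over-represented among positive classifications: P[G=L|ŷ=1] > P[G=L|Y=1]. -/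
open MeasureTheory

lemma toReal_split {Ω : Type*} [MeasurableSpace Ω] (P : Measure Ω) [IsProbabilityMeasure P]
    (s t : Set Ω) (ht : MeasurableSet t) :
    (P s).toReal = (P (s ∩ t)).toReal + (P (s ∩ tᶜ)).toReal := by
  rw [← ENNReal.toReal_add (measure_ne_top P _) (measure_ne_top P _)]
  congr 1
  rw [← Set.diff_eq, measure_inter_add_diff s ht]

set_option maxHeartbeats 1000000 in
/-- Proposition 1: if TPR_L ≥ TPR_H and FPR_L ≥ FPR_H then L is over-represented
among positive classifications. -/
theorem over_representation_of_error_rate_balance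
    {Ω : Type*} [MeasurableSpace Ω] (P : Measure Ω) [IsProbabilityMeasure P]
    (Y1 Yhat1 EL : Set Ω)
    (hY1 : MeasurableSet Y1) (hYhat1 : MeasurableSet Yhat1) (hEL : MeasurableSet EL)
    (hELpos : P EL ≠ 0) (hEHpos : P ELᶜ ≠ 0)
    (hY1pos : P Y1 ≠ 0) (hY0pos : P Y1ᶜ ≠ 0)
    (hYhat1pos : P Yhat1 ≠ 0) (hYhat0pos : P Yhat1ᶜ ≠ 0)
    (hYGL : P (Y1 ∩ EL) ≠ 0) (hYGH : P (Y1 ∩ ELᶜ) ≠ 0)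
    (hY0GL : P (Y1ᶜ ∩ EL) ≠ 0) (hY0GH : P (Y1ᶜ ∩ ELᶜ) ≠ 0)
    (hYhGL : P (Yhat1 ∩ EL) ≠ 0) (hYhGH : P (Yhat1 ∩ ELᶜ) ≠ 0)
    (hYh0GL : P (Yhat1ᶜ ∩ EL) ≠ 0) (hYh0GH : P (Yhat1ᶜ ∩ ELᶜ) ≠ 0)
    (μL μH : ℝ)
    (hμL : μL = condProb P Y1 EL) (hμH : μH = condProb P Y1 ELᶜ)
    (h0 : 0 < μL) (h1 : μL < μH) (h2 : μH < 1)
    (TPRL TPRH FPRL FPRH : ℝ)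
    (hTPRL : TPRL = condProb P Yhat1 (Y1 ∩ EL))
    (hTPRH : TPRH = condProb P Yhat1 (Y1 ∩ ELᶜ))
    (hFPRL : FPRL = condProb P Yhat1 (Y1ᶜ ∩ EL))
    (hFPRH : FPRH = condProb P Yhat1 (Y1ᶜ ∩ ELᶜ))
    (hTPRL01 : TPRL ∈ Set.Ioo (0:ℝ) 1) (hTPRH01 : TPRH ∈ Set.Ioo (0:ℝ) 1)
    (hFPRL01 : FPRL ∈ Set.Ioo (0:ℝ) 1) (hFPRH01 : FPRH ∈ Set.Ioo (0:ℝ) 1)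
    (hTPR : TPRL ≥ TPRH) (hFPR : FPRL ≥ FPRH) :
    condProb P EL Yhat1 > condProb P EL Y1 := by
  set a := (P (Y1 ∩ EL)).toReal with ha
  set b := (P (Y1 ∩ ELᶜ)).toReal with hb
  set c := (P (Y1ᶜ ∩ EL)).toReal with hc
  set d := (P (Y1ᶜ ∩ ELᶜ)).toReal with hd
  have hfin : ∀ s : Set Ω, P s ≠ ⊤ := fun s => measure_ne_top P s
  have posR : ∀ s : Set Ω, P s ≠ 0 → 0 < (P s).toReal := fun s hs =>
    ENNReal.toReal_pos hs (hfin s)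
  have hapos : 0 < a := posR _ hYGL
  have hbpos : 0 < b := posR _ hYGH
  have hcpos : 0 < c := posR _ hY0GL
  have hdpos : 0 < d := posR _ hY0GH
  have hEL1 : (P EL).toReal = a + c := by
    rw [toReal_split P EL Y1 hY1, Set.inter_comm EL Y1, Set.inter_comm EL Y1ᶜ]
  have hEH1 : (P ELᶜ).toReal = b + d := by
    rw [toReal_split P ELᶜ Y1 hY1, Set.inter_comm ELᶜ Y1, Set.inter_comm ELᶜ Y1ᶜ]
  have hadbc : a * d < b * c := by
    rw [hμL, hμH] at h1
    unfold condProb at h1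
    rw [← ha, ← hb, hEL1, hEH1, div_lt_div_iff₀ (by linarith) (by linarith)] at h1
    nlinarith
  set x1 := (P (Yhat1 ∩ (Y1 ∩ EL))).toReal with hx1
  set x2 := (P (Yhat1 ∩ (Y1 ∩ ELᶜ))).toReal with hx2
  set x3 := (P (Yhat1 ∩ (Y1ᶜ ∩ EL))).toReal with hx3
  set x4 := (P (Yhat1 ∩ (Y1ᶜ ∩ ELᶜ))).toReal with hx4
  have hx1e : x1 = TPRL * a := by
    rw [hTPRL]; unfold condProb; rw [← ha, ← hx1]; field_simp
  have hx2e : x2 = TPRH * b := by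
    rw [hTPRH]; unfold condProb; rw [← hb, ← hx2]; field_simp
  have hx3e : x3 = FPRL * c := by
    rw [hFPRL]; unfold condProb; rw [← hc, ← hx3]; field_simp
  have hx4e : x4 = FPRH * d := by
    rw [hFPRH]; unfold condProb; rw [← hd, ← hx4]; field_simp
  have e1 : EL ∩ Yhat1 ∩ Y1 = Yhat1 ∩ (Y1 ∩ EL) := by ext ω; simp [Set.mem_inter_iff]; tauto
  have e2 : EL ∩ Yhat1 ∩ Y1ᶜ = Yhat1 ∩ (Y1ᶜ ∩ EL) := by
    ext ω; simp [Set.mem_inter_iff]; tauto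
  have e3 : ELᶜ ∩ Yhat1 ∩ Y1 = Yhat1 ∩ (Y1 ∩ ELᶜ) := by
    ext ω; simp [Set.mem_inter_iff]; tauto
  have e4 : ELᶜ ∩ Yhat1 ∩ Y1ᶜ = Yhat1 ∩ (Y1ᶜ ∩ ELᶜ) := by
    ext ω; simp [Set.mem_inter_iff]; tauto
  have hELYh : (P (EL ∩ Yhat1)).toReal = x1 + x3 := by
    rw [toReal_split P (EL ∩ Yhat1) Y1 hY1, e1, e2]
  have hEHYh : (P (ELᶜ ∩ Yhat1)).toReal = x2 + x4 := by
    rw [toReal_split P (ELᶜ ∩ Yhat1) Y1 hY1, e3, e4]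
  have hYh : (P Yhat1).toReal = (x1 + x3) + (x2 + x4) := by
    rw [toReal_split P Yhat1 EL hEL, Set.inter_comm Yhat1 EL, Set.inter_comm Yhat1 ELᶜ,
      hELYh, hEHYh]
  have hELY1 : (P (EL ∩ Y1)).toReal = a := by rw [Set.inter_comm EL Y1]
  have hY1d : (P Y1).toReal = a + b := toReal_split P Y1 EL hEL
  obtain ⟨hT0, _⟩ := hTPRL01
  obtain ⟨hT0', _⟩ := hTPRH01
  obtain ⟨hF0, _⟩ := hFPRL01
  obtain ⟨hF0', _⟩ := hFPRH01
  unfold condProb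
  rw [hELYh, hYh, hELY1, hY1d, hx1e, hx2e, hx3e, hx4e]
  rw [gt_iff_lt, div_lt_div_iff₀ (by linarith)
    (by nlinarith [mul_pos hT0 hapos, mul_pos hF0 hcpos, mul_pos hT0' hbpos,
      mul_pos hF0' hdpos])]
  nlinarith [mul_nonneg (mul_nonneg (sub_nonneg.2 hTPR) hapos.le) hbpos.le,
    mul_nonneg (mul_nonneg (sub_nonneg.2 hFPR) hcpos.le) hbpos.le,
    mul_pos hF0' (by nlinarith : (0:ℝ) < b * c - a * d)]
end

section
/- Under the setup of Theorem 1, if L is not over-represented among positive classifications (P[G=L|ŷ=1] ≤ P[G=L|Y=1]) and the groups' predictive values are equal (PPV_L = PPV_H and NPV_L = NPV_H), then TPR_L < TPR_H. -/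
open MeasureTheory

set_option maxHeartbeats 1000000

private lemma key_alg (a11 a10 a01 a00 b11 b10 b01 b00 : ℝ)
    (ha01 : 0 < a01)
    (hb11 : 0 < b11) (hb10p : 0 < b11 + b10) (hqa : 0 < a11 + a10)
    (H1 : a11 * (b11 + b10) = b11 * (a11 + a10))
    (H2 : a00 * (b01 + b00) = b00 * (a01 + a00))
    (H3 : (a11 + a01) * (b11 + b10 + b01 + b00) < (b11 + b01) * (a11 + a10 + a01 + a00))
    (H4 : (a11 + a10) * (b11 + b01) ≤ (b11 + b10) * (a11 + a01)) :
    a11 * (b11 + b01) < b11 * (a11 + a01) := by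
  rcases H4.lt_or_eq with h | h
  · have h2 : b11 * ((a11 + a10) * (b11 + b01)) < b11 * ((b11 + b10) * (a11 + a01)) :=
      mul_lt_mul_of_pos_left h hb11
    have key : (a11 * (b11 + b01)) * (b11 + b10) = b11 * ((a11 + a10) * (b11 + b01)) := by
      linear_combination (b11 + b01) * H1
    have h3 : (a11 * (b11 + b01)) * (b11 + b10) < (b11 * (a11 + a01)) * (b11 + b10) := by
      rw [key]; linarith [h2]
    exact lt_of_mul_lt_mul_right h3 hb10p.le
  · exfalso
    have h0 : a01 * ((a11 + a10) * (b01 + b00)) = a01 * ((b11 + b10) * (a01 + a00)) := by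
      linear_combination (a01 + a00) * h + (a01 + a00) * H1 - (a11 + a10) * H2
    have E2 : (a11 + a10) * (b01 + b00) = (b11 + b10) * (a01 + a00) :=
      mul_left_cancel₀ (ne_of_gt ha01) h0
    have E3 : (a11 + a10) * (b11 + b10 + b01 + b00) = (b11 + b10) * (a11 + a10 + a01 + a00) := by
      linear_combination E2
    have T2 : (a11 + a10) * ((a11 + a01) * (b11 + b10 + b01 + b00))
        = (a11 + a10) * ((b11 + b01) * (a11 + a10 + a01 + a00)) := by
      linear_combination (a11 + a01) * E3 - (a11 + a10 + a01 + a00) * h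
    have := mul_left_cancel₀ (ne_of_gt hqa) T2
    linarith

private lemma split_toReal {Ω : Type*} [MeasurableSpace Ω] (P : Measure Ω)
    [IsFiniteMeasure P] {t : Set Ω} (ht : MeasurableSet t) (s : Set Ω) :
    (P s).toReal = (P (t ∩ s)).toReal + (P (tᶜ ∩ s)).toReal := by
  have h := measure_inter_add_diff (μ := P) s ht
  rw [Set.diff_eq] at h
  rw [Set.inter_comm t s, Set.inter_comm tᶜ s,
    ← ENNReal.toReal_add (measure_ne_top P _) (measure_ne_top P _), h]

/-- If L is not over-represented among positive classifications and the groups'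
predictive values are equal, then TPR_L < TPR_H. -/
theorem tpr_strictly_lower_of_equal_predictive_values
    {Ω : Type*} [MeasurableSpace Ω] (P : Measure Ω) [IsProbabilityMeasure P]
    (Y1 Yhat1 EL : Set Ω)
    (hY1 : MeasurableSet Y1) (hYhat1 : MeasurableSet Yhat1) (hEL : MeasurableSet EL)
    (hELpos : P EL ≠ 0) (hEHpos : P ELᶜ ≠ 0)
    (hY1pos : P Y1 ≠ 0) (hY0pos : P Y1ᶜ ≠ 0)
    (hYhat1pos : P Yhat1 ≠ 0) (hYhat0pos : P Yhat1ᶜ ≠ 0)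
    (hYGL : P (Y1 ∩ EL) ≠ 0) (hYGH : P (Y1 ∩ ELᶜ) ≠ 0)
    (hY0GL : P (Y1ᶜ ∩ EL) ≠ 0) (hY0GH : P (Y1ᶜ ∩ ELᶜ) ≠ 0)
    (hYhGL : P (Yhat1 ∩ EL) ≠ 0) (hYhGH : P (Yhat1 ∩ ELᶜ) ≠ 0)
    (hYh0GL : P (Yhat1ᶜ ∩ EL) ≠ 0) (hYh0GH : P (Yhat1ᶜ ∩ ELᶜ) ≠ 0)
    (μL μH : ℝ)
    (hμL : μL = condProb P Y1 EL) (hμH : μH = condProb P Y1 ELᶜ)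
    (h0 : 0 < μL) (h1 : μL < μH) (h2 : μH < 1)
    (TPRL TPRH FPRL FPRH : ℝ)
    (hTPRL : TPRL = condProb P Yhat1 (Y1 ∩ EL))
    (hTPRH : TPRH = condProb P Yhat1 (Y1 ∩ ELᶜ))
    (hFPRL : FPRL = condProb P Yhat1 (Y1ᶜ ∩ EL))
    (hFPRH : FPRH = condProb P Yhat1 (Y1ᶜ ∩ ELᶜ))
    (hTPRL01 : TPRL ∈ Set.Ioo (0:ℝ) 1) (hTPRH01 : TPRH ∈ Set.Ioo (0:ℝ) 1)
    (hFPRL01 : FPRL ∈ Set.Ioo (0:ℝ) 1) (hFPRH01 : FPRH ∈ Set.Ioo (0:ℝ) 1)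
    (PPVL PPVH NPVL NPVH : ℝ)
    (hPPVL : PPVL = condProb P Y1 (Yhat1 ∩ EL))
    (hPPVH : PPVH = condProb P Y1 (Yhat1 ∩ ELᶜ))
    (hNPVL : NPVL = condProb P Y1ᶜ (Yhat1ᶜ ∩ EL))
    (hNPVH : NPVH = condProb P Y1ᶜ (Yhat1ᶜ ∩ ELᶜ))
    (hnotover : condProb P EL Yhat1 ≤ condProb P EL Y1)
    (hPPV : PPVL = PPVH) (hNPV : NPVL = NPVH) :
    TPRL < TPRH := by
  obtain ⟨hTL0, hTL1⟩ := hTPRL01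
  obtain ⟨hTH0, hTH1⟩ := hTPRH01
  obtain ⟨hFL0, hFL1⟩ := hFPRL01
  obtain ⟨hFH0, hFH1⟩ := hFPRH01
  have fpos : ∀ {s : Set Ω}, P s ≠ 0 → 0 < (P s).toReal := fun h =>
    ENNReal.toReal_pos h (measure_ne_top P _)
  -- the eight cells
  set a11 := (P (Yhat1 ∩ (Y1 ∩ EL))).toReal with ha11d
  set a10 := (P (Yhat1 ∩ (Y1ᶜ ∩ EL))).toReal with ha10d
  set a01 := (P (Yhat1ᶜ ∩ (Y1 ∩ EL))).toReal with ha01d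
  set a00 := (P (Yhat1ᶜ ∩ (Y1ᶜ ∩ EL))).toReal with ha00d
  set b11 := (P (Yhat1 ∩ (Y1 ∩ ELᶜ))).toReal with hb11d
  set b10 := (P (Yhat1 ∩ (Y1ᶜ ∩ ELᶜ))).toReal with hb10d
  set b01 := (P (Yhat1ᶜ ∩ (Y1 ∩ ELᶜ))).toReal with hb01d
  set b00 := (P (Yhat1ᶜ ∩ (Y1ᶜ ∩ ELᶜ))).toReal with hb00d
  -- set reorderings
  have sc1 : ∀ s t : Set Ω, Y1 ∩ (s ∩ t) = s ∩ (Y1 ∩ t) := fun s t => Set.inter_left_comm _ _ _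
  have sc2 : ∀ s t : Set Ω, Y1ᶜ ∩ (s ∩ t) = s ∩ (Y1ᶜ ∩ t) := fun s t => Set.inter_left_comm _ _ _
  -- denominators / marginals
  have dYEL : (P (Y1 ∩ EL)).toReal = a11 + a01 := split_toReal P hYhat1 _
  have dY0EL : (P (Y1ᶜ ∩ EL)).toReal = a10 + a00 := split_toReal P hYhat1 _
  have dYEH : (P (Y1 ∩ ELᶜ)).toReal = b11 + b01 := split_toReal P hYhat1 _
  have dY0EH : (P (Y1ᶜ ∩ ELᶜ)).toReal = b10 + b00 := split_toReal P hYhat1 _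
  have dYhEL : (P (Yhat1 ∩ EL)).toReal = a11 + a10 := by
    rw [split_toReal P hY1 (Yhat1 ∩ EL), sc1, sc2]
  have dYhEH : (P (Yhat1 ∩ ELᶜ)).toReal = b11 + b10 := by
    rw [split_toReal P hY1 (Yhat1 ∩ ELᶜ), sc1, sc2]
  have dYh0EL : (P (Yhat1ᶜ ∩ EL)).toReal = a01 + a00 := by
    rw [split_toReal P hY1 (Yhat1ᶜ ∩ EL), sc1, sc2]
  have dYh0EH : (P (Yhat1ᶜ ∩ ELᶜ)).toReal = b01 + b00 := by
    rw [split_toReal P hY1 (Yhat1ᶜ ∩ ELᶜ), sc1, sc2]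
  have dEL : (P EL).toReal = a11 + a01 + (a10 + a00) := by
    rw [split_toReal P hY1 EL, dYEL, dY0EL]
  have dEH : (P ELᶜ).toReal = b11 + b01 + (b10 + b00) := by
    rw [split_toReal P hY1 ELᶜ, dYEH, dY0EH]
  have dYh : (P Yhat1).toReal = (a11 + a10) + (b11 + b10) := by
    rw [split_toReal P hEL Yhat1, Set.inter_comm EL Yhat1, Set.inter_comm ELᶜ Yhat1,
      dYhEL, dYhEH]
  have dY : (P Y1).toReal = (a11 + a01) + (b11 + b01) := by
    rw [split_toReal P hEL Y1, Set.inter_comm EL Y1, Set.inter_comm ELᶜ Y1, dYEL, dYEH]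
  -- rewrite all given quantities
  have eTPRL : TPRL = a11 / (a11 + a01) := by rw [hTPRL]; unfold condProb; rw [dYEL]
  have eTPRH : TPRH = b11 / (b11 + b01) := by rw [hTPRH]; unfold condProb; rw [dYEH]
  have eFPRL : FPRL = a10 / (a10 + a00) := by rw [hFPRL]; unfold condProb; rw [dY0EL]
  have eFPRH : FPRH = b10 / (b10 + b00) := by rw [hFPRH]; unfold condProb; rw [dY0EH]
  have ePPVL : PPVL = a11 / (a11 + a10) := by
    rw [hPPVL]; unfold condProb; rw [dYhEL, sc1]
  have ePPVH : PPVH = b11 / (b11 + b10) := by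
    rw [hPPVH]; unfold condProb; rw [dYhEH, sc1]
  have eNPVL : NPVL = a00 / (a01 + a00) := by
    rw [hNPVL]; unfold condProb; rw [dYh0EL, sc2]
  have eNPVH : NPVH = b00 / (b01 + b00) := by
    rw [hNPVH]; unfold condProb; rw [dYh0EH, sc2]
  have eμL : μL = (a11 + a01) / (a11 + a01 + (a10 + a00)) := by
    rw [hμL]; unfold condProb; rw [dEL, dYEL]
  have eμH : μH = (b11 + b01) / (b11 + b01 + (b10 + b00)) := by
    rw [hμH]; unfold condProb; rw [dEH, dYEH]
  have eover : (a11 + a10) / ((a11 + a10) + (b11 + b10)) ≤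
      (a11 + a01) / ((a11 + a01) + (b11 + b01)) := by
    have e1 : condProb P EL Yhat1 = (a11 + a10) / ((a11 + a10) + (b11 + b10)) := by
      unfold condProb; rw [dYh, Set.inter_comm EL Yhat1, dYhEL]
    have e2 : condProb P EL Y1 = (a11 + a01) / ((a11 + a01) + (b11 + b01)) := by
      unfold condProb; rw [dY, Set.inter_comm EL Y1, dYEL]
    rw [← e1, ← e2]; exact hnotover
  -- positivity of denominators
  have pYEL : 0 < a11 + a01 := dYEL ▸ fpos hYGL
  have pYEH : 0 < b11 + b01 := dYEH ▸ fpos hYGH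
  have pY0EL : 0 < a10 + a00 := dY0EL ▸ fpos hY0GL
  have pY0EH : 0 < b10 + b00 := dY0EH ▸ fpos hY0GH
  have pYhEL : 0 < a11 + a10 := dYhEL ▸ fpos hYhGL
  have pYhEH : 0 < b11 + b10 := dYhEH ▸ fpos hYhGH
  have pYh0EL : 0 < a01 + a00 := dYh0EL ▸ fpos hYh0GL
  have pYh0EH : 0 < b01 + b00 := dYh0EH ▸ fpos hYh0GH
  -- positivity of the cells we need
  have ea11 : a11 = TPRL * (a11 + a01) := by rw [eTPRL]; field_simp
  have eb11 : b11 = TPRH * (b11 + b01) := by rw [eTPRH]; field_simp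
  have ea10 : a10 = FPRL * (a10 + a00) := by rw [eFPRL]; field_simp
  have eb10 : b10 = FPRH * (b10 + b00) := by rw [eFPRH]; field_simp
  have pa11 : 0 < a11 := by rw [ea11]; exact mul_pos hTL0 pYEL
  have pb11 : 0 < b11 := by rw [eb11]; exact mul_pos hTH0 pYEH
  have pa01 : 0 < a01 := by
    have h' : a01 = (1 - TPRL) * (a11 + a01) := by linear_combination -ea11
    rw [h']; exact mul_pos (by linarith) pYEL
  have pb01 : 0 < b01 := by
    have h' : b01 = (1 - TPRH) * (b11 + b01) := by linear_combination -eb11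
    rw [h']; exact mul_pos (by linarith) pYEH
  have pa00 : 0 < a00 := by
    have h' : a00 = (1 - FPRL) * (a10 + a00) := by linear_combination -ea10
    rw [h']; exact mul_pos (by linarith) pY0EL
  have pb00 : 0 < b00 := by
    have h' : b00 = (1 - FPRH) * (b10 + b00) := by linear_combination -eb10
    rw [h']; exact mul_pos (by linarith) pY0EH
  -- cross-multiplied hypotheses
  have H1 : a11 * (b11 + b10) = b11 * (a11 + a10) := by
    have := ePPVL.symm.trans (hPPV.trans ePPVH)
    exact (div_eq_div_iff (ne_of_gt pYhEL) (ne_of_gt pYhEH)).1 this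
  have H2 : a00 * (b01 + b00) = b00 * (a01 + a00) := by
    have := eNPVL.symm.trans (hNPV.trans eNPVH)
    exact (div_eq_div_iff (ne_of_gt pYh0EL) (ne_of_gt pYh0EH)).1 this
  have H3 : (a11 + a01) * (b11 + b10 + b01 + b00) < (b11 + b01) * (a11 + a10 + a01 + a00) := by
    rw [eμL, eμH] at h1
    have h2 := (div_lt_div_iff₀ (by linarith) (by linarith)).1 h1
    linarith [h2]
  have H4 : (a11 + a10) * (b11 + b01) ≤ (b11 + b10) * (a11 + a01) := by
    have h2 := (div_le_div_iff₀ (by linarith) (by linarith)).1 eover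
    linarith [h2]
  have key := key_alg a11 a10 a01 a00 b11 b10 b01 b00 pa01 pb11 pYhEH pYhEL H1 H2 H3 H4
  rw [eTPRL, eTPRH]
  exact (div_lt_div_iff₀ pYEL pYEH).2 key
end

section
/- (Proposition 2) Let A be an integrable random variable, X and G random variables, with E[A|X,G] = E[A|X] almost surely. Define the score S = E[A|X]. Then E[A|S,G] = S almost surely. -/
open MeasureTheory

/-- Proposition 2: if `E[A | X, G] = E[A | X]` a.s., then the score `S = E[A | X]`
satisfies `E[A | S, G] = S` a.s. -/
theorem score_is_conditional_mean_given_score_and_group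
    {Ω E F : Type*} [MeasurableSpace Ω] {mE : MeasurableSpace E} {mF : MeasurableSpace F}
    (P : Measure Ω) [IsProbabilityMeasure P]
    (A : Ω → ℝ) (X : Ω → E) (G : Ω → F)
    (hA : Integrable A P) (hX : Measurable X) (hG : Measurable G)
    (S : Ω → ℝ) (hS : S = P[A | MeasurableSpace.comap X mE])
    (hCMI : P[A | MeasurableSpace.comap X mE ⊔ MeasurableSpace.comap G mF]
            =ᵐ[P] P[A | MeasurableSpace.comap X mE]) :
    P[A | MeasurableSpace.comap S (borel ℝ) ⊔ MeasurableSpace.comap G mF] =ᵐ[P] S := by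
  let m0 : MeasurableSpace Ω := inferInstance
  set mX := MeasurableSpace.comap X mE with hmX
  set mG := MeasurableSpace.comap G mF with hmG
  have hborel : borel ℝ = Real.measurableSpace :=
    BorelSpace.measurable_eq.symm
  have hSm : StronglyMeasurable[mX] S := hS ▸ stronglyMeasurable_condExp
  have hScomap : MeasurableSpace.comap S (borel ℝ) ≤ mX := by
    rw [hborel]
    exact hSm.measurable.comap_le
  have hmXle : mX ≤ m0 := hX.comap_le
  have hmGle : mG ≤ m0 := hG.comap_le
  have hmXGle : mX ⊔ mG ≤ m0 := sup_le hmXle hmGle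
  set m := MeasurableSpace.comap S (borel ℝ) ⊔ mG with hm
  have hmle : m ≤ mX ⊔ mG := sup_le (hScomap.trans le_sup_left) le_sup_right
  have hmle0 : m ≤ m0 := hmle.trans hmXGle
  have tower : P[P[A | mX ⊔ mG] | m] =ᵐ[P] P[A | m] :=
    condExp_condExp_of_le hmle hmXGle
  have h2 : P[P[A | mX ⊔ mG] | m] =ᵐ[P] P[S | m] :=
    condExp_congr_ae (hCMI.trans (by rw [hS]))
  have hSmeas : StronglyMeasurable[m] S := by
    have : Measurable[m] S := by
      rw [measurable_iff_comap_le, ← hborel]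
      exact le_sup_left
    exact this.stronglyMeasurable
  have h3 : P[S | m] = S :=
    condExp_of_stronglyMeasurable hmle0 hSmeas (hS ▸ integrable_condExp)
  exact (tower.symm.trans h2).trans (by rw [h3])
end

section
/- Consider two groups with S_G ~ N(μ_G, σ²) and ε_G ~ N(0, τ²) independent, identical variances across groups, and μ_L < μ_H. Then for every cutoff c, P[S_L > c | S_L + ε_L > 0] < P[S_H > c | S_H + ε_H > 0]: the lower-mean group has a strictly smaller true positive rate at every cutoff. -/
open MeasureTheory ProbabilityTheory

/-- Standard normal density φ. -/
noncomputable def stdNormalPdf (z : ℝ) : ℝ := Real.exp (-z ^ 2 / 2) / Real.sqrt (2 * Real.pi)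

/-- Standard normal distribution function Φ. -/
noncomputable def stdNormalCdf (z : ℝ) : ℝ := ((gaussianReal 0 1) (Set.Iic z)).toReal

/-!
Put `ψ(x) = P(ε > -x)`. By independence, `P(S > c, S + ε > 0) = ∫_{x > c} ψ dN(μ, σ²)` and
`P(S + ε > 0) = n + m`, where `n` and `m` are the integrals of `ψ` over `x > c` and `x ≤ c`.
The true positive rate `n / (n + m)` is larger for `μ_H` iff `n_L m_H < n_H m_L`. Both products
are integrals over `{s > c} × {t ≤ c}`, and the integrands compare pointwise by the monotone
likelihood ratio of Gaussians with a common variance: `φ_L(s) φ_H(t) < φ_H(s) φ_L(t)` for `t < s`.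
-/

open Set
open scoped NNReal ENNReal

theorem setLIntegral_Ioi_mul_setLIntegral_Iic_lt {μ : Measure ℝ} [SFinite μ]
    {f g : ℝ → ℝ≥0∞} (hf : Measurable f) (hg : Measurable g) {c : ℝ}
    (hIoi : μ (Ioi c) ≠ 0) (hIic : μ (Iic c) ≠ 0)
    (hfg : ∀ ⦃s t⦄, t < s → f s * g t < g s * f t)
    (hfin : (∫⁻ x in Ioi c, f x ∂μ) * (∫⁻ x in Iic c, g x ∂μ) ≠ ∞) :
    (∫⁻ x in Ioi c, f x ∂μ) * (∫⁻ x in Iic c, g x ∂μ)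
      < (∫⁻ x in Ioi c, g x ∂μ) * ∫⁻ x in Iic c, f x ∂μ := by
  rw [← lintegral_prod_mul hf.aemeasurable hg.aemeasurable] at hfin ⊢
  rw [← lintegral_prod_mul hg.aemeasurable hf.aemeasurable]
  rw [Measure.prod_restrict] at hfin ⊢
  refine lintegral_strict_mono ?_ (by fun_prop) hfin ?_
  · rw [Ne, ← Measure.measure_univ_eq_zero, Measure.restrict_apply_univ, Measure.prod_prod]
    exact mul_ne_zero hIoi hIic
  · filter_upwards [ae_restrict_mem (measurableSet_Ioi.prod measurableSet_Iic)] with p hp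
    exact hfg (hp.2.trans_lt hp.1)

section Gaussian

variable {μ₁ μ₂ : ℝ} {v : ℝ≥0}

theorem gaussianPDFReal_mul_lt_mul_of_lt (hμ : μ₁ < μ₂) (hv : v ≠ 0) {s t : ℝ} (hts : t < s) :
    gaussianPDFReal μ₁ v s * gaussianPDFReal μ₂ v t
      < gaussianPDFReal μ₂ v s * gaussianPDFReal μ₁ v t := by
  have hv_pos : (0 : ℝ) < v := by positivity
  simp only [gaussianPDFReal, mul_mul_mul_comm _ (Real.exp _), ← Real.exp_add]
  refine mul_lt_mul_of_pos_left (Real.exp_lt_exp.2 ?_) (by positivity)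
  rw [← add_div, ← add_div, div_lt_div_iff_of_pos_right (by positivity)]
  -- the two exponents differ by `2 (μ₂ - μ₁) (s - t)` before dividing by `2v`
  nlinarith [mul_pos (sub_pos.2 hμ) (sub_pos.2 hts)]

theorem gaussianPDF_mul_lt_mul_of_lt (hμ : μ₁ < μ₂) (hv : v ≠ 0) {s t : ℝ} (hts : t < s) :
    gaussianPDF μ₁ v s * gaussianPDF μ₂ v t < gaussianPDF μ₂ v s * gaussianPDF μ₁ v t := by
  simp only [gaussianPDF, ← ENNReal.ofReal_mul (gaussianPDFReal_nonneg _ _ _)]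
  exact (ENNReal.ofReal_lt_ofReal_iff (mul_pos (gaussianPDFReal_pos _ _ _ hv)
    (gaussianPDFReal_pos _ _ _ hv))).2 (gaussianPDFReal_mul_lt_mul_of_lt hμ hv hts)

theorem gaussianReal_Ioi_ne_zero (μ : ℝ) (hv : v ≠ 0) (a : ℝ) : gaussianReal μ v (Ioi a) ≠ 0 :=
  fun h ↦ by simpa using gaussianReal_absolutelyContinuous' μ hv h

theorem gaussianReal_setLIntegral_Ioi_mul_setLIntegral_Iic_lt (hμ : μ₁ < μ₂) (hv : v ≠ 0)
    {ψ : ℝ → ℝ≥0∞} (hψ : Measurable ψ) (hψ_ne_zero : ∀ x, ψ x ≠ 0)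
    (hψ_le_one : ∀ x, ψ x ≤ 1) (c : ℝ) :
    (∫⁻ x in Ioi c, ψ x ∂gaussianReal μ₁ v) * (∫⁻ x in Iic c, ψ x ∂gaussianReal μ₂ v)
      < (∫⁻ x in Ioi c, ψ x ∂gaussianReal μ₂ v) * ∫⁻ x in Iic c, ψ x ∂gaussianReal μ₁ v := by
  have hfin : (∫⁻ x in Ioi c, ψ x ∂gaussianReal μ₁ v) * (∫⁻ x in Iic c, ψ x ∂gaussianReal μ₂ v)
      ≠ ∞ := ENNReal.mul_ne_top
    (setLIntegral_lt_top_of_le_nnreal (measure_ne_top _ _) ⟨1, fun x _ ↦ hψ_le_one x⟩).ne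
    (setLIntegral_lt_top_of_le_nnreal (measure_ne_top _ _) ⟨1, fun x _ ↦ hψ_le_one x⟩).ne
  simp only [gaussianReal_of_var_ne_zero _ hv,
    setLIntegral_withDensity_eq_setLIntegral_mul _ (measurable_gaussianPDF _ _) hψ
      measurableSet_Ioi,
    setLIntegral_withDensity_eq_setLIntegral_mul _ (measurable_gaussianPDF _ _) hψ
      measurableSet_Iic] at hfin ⊢
  refine setLIntegral_Ioi_mul_setLIntegral_Iic_lt (by fun_prop) (by fun_prop) (by simp)
    (by simp) (fun s t hts ↦ ?_) hfin
  have hψψ : ψ s * ψ t ≠ 0 := mul_ne_zero (hψ_ne_zero s) (hψ_ne_zero t)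
  have hψψ_top : ψ s * ψ t ≠ ∞ := ENNReal.mul_ne_top
    (ne_top_of_le_ne_top ENNReal.one_ne_top (hψ_le_one s))
    (ne_top_of_le_ne_top ENNReal.one_ne_top (hψ_le_one t))
  calc gaussianPDF μ₁ v s * ψ s * (gaussianPDF μ₂ v t * ψ t)
      = gaussianPDF μ₁ v s * gaussianPDF μ₂ v t * (ψ s * ψ t) := by ring
    _ < gaussianPDF μ₂ v s * gaussianPDF μ₁ v t * (ψ s * ψ t) :=
      ENNReal.mul_lt_mul_left hψψ hψψ_top (gaussianPDF_mul_lt_mul_of_lt hμ hv hts)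
    _ = gaussianPDF μ₂ v s * ψ s * (gaussianPDF μ₁ v t * ψ t) := by ring

end Gaussian

theorem measurable_measure_Ioi_neg (ν : Measure ℝ) : Measurable fun x ↦ ν (Ioi (-x)) :=
  Monotone.measurable fun _ _ hxy ↦ measure_mono (Ioi_subset_Ioi (neg_le_neg hxy))

theorem MeasureTheory.Measure.prod_fst_mem_and_add_pos {μ ν : Measure ℝ} [SFinite ν]
    {A : Set ℝ} (hA : MeasurableSet A) :
    μ.prod ν {p | p.1 ∈ A ∧ 0 < p.1 + p.2} = ∫⁻ x in A, ν (Ioi (-x)) ∂μ := by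
  rw [Measure.prod_apply (by measurability), ← lintegral_indicator hA]
  congr with x
  by_cases hx : x ∈ A
  · rw [indicator_of_mem hx]
    congr 1 with y
    simp [hx, neg_lt_iff_pos_add']
  · simp [hx]

namespace ProbabilityTheory.IndepFun

variable {Ω : Type*} [MeasurableSpace Ω] {P : Measure Ω} [IsFiniteMeasure P] {S ε : Ω → ℝ}

theorem measure_mem_and_add_pos (hind : IndepFun S ε P) (hS : Measurable S)
    (hε : Measurable ε) {A : Set ℝ} (hA : MeasurableSet A) :
    P {ω | S ω ∈ A ∧ 0 < S ω + ε ω} = ∫⁻ x in A, P.map ε (Ioi (-x)) ∂P.map S := by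
  rw [← Measure.prod_fst_mem_and_add_pos hA,
    ← (indepFun_iff_map_prod_eq_prod_map_map hS.aemeasurable hε.aemeasurable).1 hind,
    Measure.map_apply (hS.prodMk hε) (by measurability)]
  rfl

theorem measure_add_pos (hind : IndepFun S ε P) (hS : Measurable S) (hε : Measurable ε)
    (c : ℝ) :
    P {ω | 0 < S ω + ε ω} = (∫⁻ x in Ioi c, P.map ε (Ioi (-x)) ∂P.map S)
      + ∫⁻ x in Iic c, P.map ε (Ioi (-x)) ∂P.map S := by
  rw [← compl_Ioi, lintegral_add_compl _ measurableSet_Ioi]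
  simpa using hind.measure_mem_and_add_pos hS hε MeasurableSet.univ

end ProbabilityTheory.IndepFun

theorem ENNReal.toReal_div_toReal_add_lt {a b a' b' : ℝ≥0∞} (hab : a + b ≠ ∞)
    (hab' : a' + b' ≠ ∞) (h : a * b' < a' * b) :
    a.toReal / (a + b).toReal < a'.toReal / (a' + b').toReal := by
  obtain ⟨ha, hb⟩ := ENNReal.add_ne_top.1 hab
  obtain ⟨ha', hb'⟩ := ENNReal.add_ne_top.1 hab'
  have h' : a.toReal * b'.toReal < a'.toReal * b.toReal := by
    simpa [ENNReal.toReal_mul] using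
      (ENNReal.toReal_lt_toReal (by finiteness) (by finiteness)).2 h
  obtain ⟨ha'0, hb0⟩ := mul_ne_zero_iff.1 (pos_of_gt h).ne'
  have ha'_pos : 0 < a'.toReal := ENNReal.toReal_pos ha'0 ha'
  have hb_pos : 0 < b.toReal := ENNReal.toReal_pos hb0 hb
  rw [ENNReal.toReal_add ha hb, ENNReal.toReal_add ha' hb',
    div_lt_div_iff₀ (by positivity) (by positivity)]
  nlinarith

/-- With equal score and residual variances across groups and μL < μH, the
lower-mean group has a strictly smaller true positive rate at every cutoff. -/
theorem lower_mean_group_lower_tpr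
    {Ω : Type*} [MeasurableSpace Ω] (P : Measure Ω) [IsProbabilityMeasure P]
    (SL εL SH εH : Ω → ℝ)
    (hSL : Measurable SL) (hεL : Measurable εL)
    (hSH : Measurable SH) (hεH : Measurable εH)
    (μL μH σ τ : ℝ) (hσ : 0 < σ) (hτ : 0 < τ) (hμ : μL < μH)
    (hSLlaw : P.map SL = gaussianReal μL (Real.toNNReal (σ ^ 2)))
    (hSHlaw : P.map SH = gaussianReal μH (Real.toNNReal (σ ^ 2)))
    (hεLlaw : P.map εL = gaussianReal 0 (Real.toNNReal (τ ^ 2)))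
    (hεHlaw : P.map εH = gaussianReal 0 (Real.toNNReal (τ ^ 2)))
    (hindepL : IndepFun SL εL P) (hindepH : IndepFun SH εH P) (c : ℝ) :
    (P ({ω | SL ω > c} ∩ {ω | SL ω + εL ω > 0})).toReal
        / (P {ω | SL ω + εL ω > 0}).toReal
      < (P ({ω | SH ω > c} ∩ {ω | SH ω + εH ω > 0})).toReal
          / (P {ω | SH ω + εH ω > 0}).toReal := by
  have hv : (σ ^ 2).toNNReal ≠ 0 := by simp [hσ.ne']
  have hw : (τ ^ 2).toNNReal ≠ 0 := by simp [hτ.ne']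
  have hnumL : P ({ω | SL ω > c} ∩ {ω | SL ω + εL ω > 0}) = _ :=
    hindepL.measure_mem_and_add_pos hSL hεL measurableSet_Ioi
  have hnumH : P ({ω | SH ω > c} ∩ {ω | SH ω + εH ω > 0}) = _ :=
    hindepH.measure_mem_and_add_pos hSH hεH measurableSet_Ioi
  have hdenL := hindepL.measure_add_pos hSL hεL c
  have hdenH := hindepH.measure_add_pos hSH hεH c
  rw [hnumL, hnumH, hdenL, hdenH]
  refine ENNReal.toReal_div_toReal_add_lt (hdenL ▸ measure_ne_top P _)
    (hdenH ▸ measure_ne_top P _) ?_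
  rw [hSLlaw, hεLlaw, hSHlaw, hεHlaw]
  exact gaussianReal_setLIntegral_Ioi_mul_setLIntegral_Iic_lt hμ hv (measurable_measure_Ioi_neg _)
    (fun x ↦ gaussianReal_Ioi_ne_zero 0 hw _) (fun x ↦ prob_le_one) c
end
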